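/- For the Klein–Gordon system the partially strong transparency condition holds with exponent 1/2: there exists a constant C > 0 (depending only on d and λ) such that for all ξ ∈ ℝ^d, |Π₁(ξ) B(e₁) Π₃(ξ)| ≤ C |λ₁(ξ) − 1|^{1/2} and |Π₂(ξ) B(e_{−1}) Π₃(ξ)| ≤ C |λ₂(ξ) + 1|^{1/2}, where |·| denotes a matrix norm and B(e_p)V := B(e_p, V). -/

import Mathlib

/- STATEMENT 16: the partially strong transparency condition with exponent 1/2
for the Klein–Gordon system:
|Π₁(ξ)B(e₁)Π₃(ξ)| ≤ C|λ₁(ξ)−1|^{1/2} and |Π₂(ξ)B(e_{−1})Π₃(ξ)| ≤ C|λ₂(ξ)+1|^{1/2}.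
As matrix norm we take the Frobenius norm. -/

noncomputable section

open Complex Matrix

abbrev KGIdx (d : ℕ) := Fin d ⊕ (Unit ⊕ Unit)

def sqn {d : ℕ} (ξ : Fin d → ℝ) : ℝ := ∑ i, ξ i ^ 2

def jap {d : ℕ} (ξ : Fin d → ℝ) : ℝ := Real.sqrt (1 + sqn ξ)

def lam1 {d : ℕ} (ξ : Fin d → ℝ) : ℝ := jap ξ
def lam2 {d : ℕ} (ξ : Fin d → ℝ) : ℝ := -jap ξ

/-- e₁ = (0_d, −i, 1). -/
def KGe1 {d : ℕ} : KGIdx d → ℂ := fun i =>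
  match i with
  | .inr (.inl _) => -Complex.I
  | .inr (.inr _) => 1
  | _ => 0

/-- e_{−1} = (0_d, i, 1). -/
def KGem1 {d : ℕ} : KGIdx d → ℂ := fun i =>
  match i with
  | .inr (.inl _) => Complex.I
  | .inr (.inr _) => 1
  | _ => 0

/-- The matrix of V ↦ B(e, V) where B((w₁,v₁,u₁),(w₂,v₂,u₂)) = −λ(0, u₁u₂, 0):
only the (v-row, u-column) entry is nonzero, equal to −λ·e_u. -/
def KGBmat {d : ℕ} (lam : ℝ) (e : KGIdx d → ℂ) : Matrix (KGIdx d) (KGIdx d) ℂ := fun i j =>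
  match i, j with
  | .inr (.inl _), .inr (.inr _) => -(lam : ℂ) * e (.inr (.inr ()))
  | _, _ => 0

def KGPi12 {d : ℕ} (l : ℝ) (ξ : Fin d → ℝ) : Matrix (KGIdx d) (KGIdx d) ℂ := fun i j =>
  (1 / 2 : ℂ) *
    match i, j with
    | .inl a, .inl b => ((ξ a * ξ b / l ^ 2 : ℝ) : ℂ)
    | .inl a, .inr (.inl _) => ((ξ a / l : ℝ) : ℂ)
    | .inl a, .inr (.inr _) => -Complex.I * ((ξ a / l ^ 2 : ℝ) : ℂ)
    | .inr (.inl _), .inl b => ((ξ b / l : ℝ) : ℂ)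
    | .inr (.inl _), .inr (.inl _) => 1
    | .inr (.inl _), .inr (.inr _) => -Complex.I * ((1 / l : ℝ) : ℂ)
    | .inr (.inr _), .inl b => Complex.I * ((ξ b / l ^ 2 : ℝ) : ℂ)
    | .inr (.inr _), .inr (.inl _) => Complex.I * ((1 / l : ℝ) : ℂ)
    | .inr (.inr _), .inr (.inr _) => ((1 / l ^ 2 : ℝ) : ℂ)

def KGPi3 {d : ℕ} (ξ : Fin d → ℝ) : Matrix (KGIdx d) (KGIdx d) ℂ := fun i j =>
  (((d : ℝ) + sqn ξ : ℝ) : ℂ)⁻¹ *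
    match i, j with
    | .inl a, .inl b => if a = b then 1 else 0
    | .inl a, .inr (.inr _) => -Complex.I * (ξ a : ℂ)
    | .inr (.inr _), .inl b => Complex.I * (ξ b : ℂ)
    | .inr (.inr _), .inr (.inr _) => ((sqn ξ : ℝ) : ℂ)
    | _, _ => 0


/-- Frobenius norm of a complex matrix. -/
def matNorm {n : Type*} [Fintype n] (M : Matrix n n ℂ) : ℝ :=
  Real.sqrt (∑ i, ∑ j, Complex.normSq (M i j))

/-!
`B(e_{±1})` has a single nonzero entry, `-λ` in the (v, u) slot, so `Π_j B(e_{±1}) Π₃` is the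
rank-one matrix `-λ · (column v of Π_j) ⊗ (row u of Π₃)`, whose Frobenius norm is `|λ|` times the
product of the lengths of these two vectors. Since `λ_j² = ⟨ξ⟩²` the column has squared length
`1/2`, and the row has squared length `|ξ|²(1 + |ξ|²)/(d + |ξ|²)² ≤ |ξ|²/(1 + |ξ|²)`, which is at
most `2(⟨ξ⟩ - 1)` because `|ξ|² = (⟨ξ⟩ - 1)(⟨ξ⟩ + 1)`.
-/

theorem Matrix.mul_single_mul_apply {l m n o α : Type*} [Fintype m] [Fintype n] [DecidableEq m]
    [DecidableEq n] [NonUnitalNonAssocSemiring α] (A : Matrix l m α) (M : Matrix n o α) (i : m)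
    (j : n) (c : α) (a : l) (b : o) :
    (A * single i j c * M) a b = A a i * c * M j b := by
  simp [mul_apply, single, ite_and]

theorem matNorm_mul_single_mul {n : Type*} [Fintype n] [DecidableEq n] (A M : Matrix n n ℂ)
    (i j : n) (c : ℂ) :
    matNorm (A * Matrix.single i j c * M)
      = √(Complex.normSq c * ((∑ a, Complex.normSq (A a i)) * ∑ b, Complex.normSq (M j b))) := by
  simp only [matNorm, Matrix.mul_single_mul_apply, Complex.normSq_mul]
  rw [Finset.sum_mul_sum, Finset.mul_sum]
  congr 1
  refine Finset.sum_congr rfl fun a _ => ?_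
  rw [Finset.mul_sum]
  exact Finset.sum_congr rfl fun b _ => by ring

theorem sqn_nonneg {d : ℕ} (ξ : Fin d → ℝ) : 0 ≤ sqn ξ :=
  Finset.sum_nonneg fun _ _ => sq_nonneg _

theorem jap_sq {d : ℕ} (ξ : Fin d → ℝ) : jap ξ ^ 2 = 1 + sqn ξ :=
  Real.sq_sqrt (by linarith [sqn_nonneg ξ])

theorem one_le_jap {d : ℕ} (ξ : Fin d → ℝ) : 1 ≤ jap ξ :=
  Real.one_le_sqrt.mpr (by linarith [sqn_nonneg ξ])

theorem KGBmat_eq_single {d : ℕ} (lam : ℝ) (e : KGIdx d → ℂ) :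
    KGBmat lam e =
      Matrix.single (.inr (.inl ())) (.inr (.inr ())) (-(lam : ℂ) * e (.inr (.inr ()))) := by
  ext (a | (⟨⟩ | ⟨⟩)) (b | (⟨⟩ | ⟨⟩)) <;> simp [KGBmat, Matrix.single]

theorem sum_normSq_KGPi12_col {d : ℕ} (l : ℝ) (ξ : Fin d → ℝ) (hl : l ^ 2 = 1 + sqn ξ) :
    ∑ a, Complex.normSq (KGPi12 l ξ a (.inr (.inl ()))) = 1 / 2 := by
  have hl0 : l ≠ 0 := by rintro rfl; linarith [sqn_nonneg ξ]
  simp only [KGPi12, Fintype.sum_sum_type, Finset.univ_unique, Finset.sum_singleton,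
    Complex.normSq_mul, Complex.normSq_ofReal, Complex.normSq_one, Complex.normSq_I]
  have hsum : ∑ a, ξ a / l * (ξ a / l) = sqn ξ / l ^ 2 := by
    rw [sqn, Finset.sum_div]
    exact Finset.sum_congr rfl fun a _ => by ring
  have hhalf : Complex.normSq (1 / 2) = 1 / 4 := by norm_num [Complex.normSq_apply]
  rw [← Finset.mul_sum, hsum, hhalf]
  field_simp
  linarith

theorem sum_normSq_KGPi3_row {d : ℕ} (ξ : Fin d → ℝ) :
    ∑ b, Complex.normSq (KGPi3 ξ (.inr (.inr ())) b) = (sqn ξ + sqn ξ ^ 2) / (d + sqn ξ) ^ 2 := by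
  simp only [KGPi3, Fintype.sum_sum_type, Finset.univ_unique, Finset.sum_singleton,
    Complex.normSq_mul, Complex.normSq_ofReal, Complex.normSq_zero, Complex.normSq_I, map_inv₀,
    one_mul, mul_zero, zero_add]
  have hsum : ∑ b, ξ b * ξ b = sqn ξ := Finset.sum_congr rfl fun b _ => (sq (ξ b)).symm
  rw [← Finset.mul_sum, hsum]
  ring

theorem sq_add_div_le_sqrt_one_add_sub_one {s D : ℝ} (hs : 0 ≤ s) (hD : 1 + s ≤ D) :
    1 / 2 * ((s + s ^ 2) / D ^ 2) ≤ √(1 + s) - 1 := by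
  have ht1 : 1 ≤ √(1 + s) := Real.one_le_sqrt.mpr (by linarith)
  have ht2 : √(1 + s) ^ 2 = 1 + s := Real.sq_sqrt (by linarith)
  calc 1 / 2 * ((s + s ^ 2) / D ^ 2) ≤ 1 / 2 * ((s + s ^ 2) / (1 + s) ^ 2) := by gcongr
    _ = s / (2 * √(1 + s) ^ 2) := by rw [ht2]; field_simp
    _ ≤ √(1 + s) - 1 := by
      rw [div_le_iff₀ (by positivity)]
      -- `s = (t - 1)(t + 1)` with `t = √(1 + s)`, and `t + 1 ≤ 2t²`
      nlinarith [mul_nonneg (sub_nonneg.mpr ht1) (sub_nonneg.mpr ht1)]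

theorem matNorm_KGPi12_mul_KGBmat_mul_KGPi3_le {d : ℕ} (hd : 1 ≤ d) (lam l : ℝ)
    (ξ : Fin d → ℝ) (hl : l ^ 2 = 1 + sqn ξ) (e : KGIdx d → ℂ) (he : e (.inr (.inr ())) = 1) :
    matNorm (KGPi12 l ξ * KGBmat lam e * KGPi3 ξ) ≤ |lam| * √(jap ξ - 1) := by
  have hdξ : 1 + sqn ξ ≤ d + sqn ξ := by gcongr; exact_mod_cast hd
  calc matNorm (KGPi12 l ξ * KGBmat lam e * KGPi3 ξ)
      = √(lam ^ 2 * (1 / 2 * ((sqn ξ + sqn ξ ^ 2) / (d + sqn ξ) ^ 2))) := by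
        rw [KGBmat_eq_single, matNorm_mul_single_mul, sum_normSq_KGPi12_col l ξ hl,
          sum_normSq_KGPi3_row, he, mul_one, Complex.normSq_neg, Complex.normSq_ofReal, ← sq]
    _ ≤ √(lam ^ 2 * (jap ξ - 1)) := by
        gcongr
        exact sq_add_div_le_sqrt_one_add_sub_one (sqn_nonneg ξ) hdξ
    _ = |lam| * √(jap ξ - 1) := by rw [Real.sqrt_mul (sq_nonneg lam), Real.sqrt_sq_eq_abs]

theorem lam1_sq {d : ℕ} (ξ : Fin d → ℝ) : lam1 ξ ^ 2 = 1 + sqn ξ := jap_sq ξ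

theorem lam2_sq {d : ℕ} (ξ : Fin d → ℝ) : lam2 ξ ^ 2 = 1 + sqn ξ := by
  rw [lam2, neg_sq, jap_sq]

theorem abs_lam1_sub_one {d : ℕ} (ξ : Fin d → ℝ) : |lam1 ξ - 1| = jap ξ - 1 :=
  abs_of_nonneg (sub_nonneg.mpr (one_le_jap ξ))

theorem abs_lam2_add_one {d : ℕ} (ξ : Fin d → ℝ) : |lam2 ξ + 1| = jap ξ - 1 := by
  rw [lam2, abs_of_nonpos (by linarith [one_le_jap ξ])]
  ring

theorem stmt16 (d : ℕ) (hd : 1 ≤ d) (lam : ℝ) :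
    ∃ C > 0, ∀ ξ : Fin d → ℝ,
      matNorm (KGPi12 (lam1 ξ) ξ * KGBmat lam KGe1 * KGPi3 ξ)
          ≤ C * |lam1 ξ - 1| ^ ((1 : ℝ) / 2) ∧
      matNorm (KGPi12 (lam2 ξ) ξ * KGBmat lam KGem1 * KGPi3 ξ)
          ≤ C * |lam2 ξ + 1| ^ ((1 : ℝ) / 2) := by
  refine ⟨|lam| + 1, by positivity, fun ξ => ?_⟩
  have hC : |lam| * √(jap ξ - 1) ≤ (|lam| + 1) * √(jap ξ - 1) := by gcongr; linarith
  rw [abs_lam1_sub_one, abs_lam2_add_one, ← Real.sqrt_eq_rpow]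
  exact ⟨(matNorm_KGPi12_mul_KGBmat_mul_KGPi3_le hd lam _ ξ (lam1_sq ξ) KGe1 rfl).trans hC,
    (matNorm_KGPi12_mul_KGBmat_mul_KGPi3_le hd lam _ ξ (lam2_sq ξ) KGem1 rfl).trans hC⟩

end
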